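/- Let φ be a ℂ-algebra automorphism of the polynomial ring ℂ[x,y,z] that preserves the weighted grading with wt(x) = wt(y) = 1, wt(z) = 2, i.e. φ maps the weighted homogeneous component of each degree n into itself. Then there exist α, β, γ, δ, ε ∈ ℂ with αδ − βγ ≠ 0 and ε ≠ 0, and a homogeneous polynomial q of degree 2 in the variables x, y only, such that φ(x) = αx + βy, φ(y) = γx + δy, and φ(z) = εz + q(x,y). -/
import Mathlib


open MvPolynomial

noncomputable section

/-- The polynomial ring `ℂ[x, y, z]`, with `x = X 0`, `y = X 1`, `z = X 2`. -/
abbrev P3 : Type := MvPolynomial (Fin 3) ℂ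

/-- The weights `wt(x) = wt(y) = 1`, `wt(z) = 2`. -/
def w112 : Fin 3 → ℕ := ![1, 1, 2]


lemma weight_w112 (d : Fin 3 →₀ ℕ) :
    Finsupp.weight w112 d = d 0 + d 1 + 2 * d 2 := by
  rw [Finsupp.weight_apply, Finsupp.sum_fintype _ _ (fun i => by simp)]
  simp [Fin.sum_univ_three, w112, mul_comm]

lemma deg1_cases (d : Fin 3 →₀ ℕ) (h : Finsupp.weight w112 d = 1) :
    d = Finsupp.single 0 1 ∨ d = Finsupp.single 1 1 := by
  rw [weight_w112] at h
  have h2 : d 2 = 0 := by omega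
  rcases Nat.eq_zero_or_pos (d 0) with h0 | h0
  · right
    have h1 : d 1 = 1 := by omega
    ext i; fin_cases i <;> simp [h0, h1, h2, Finsupp.single_apply]
  · left
    have h0' : d 0 = 1 := by omega
    have h1 : d 1 = 0 := by omega
    ext i; fin_cases i <;> simp [h0', h1, h2, Finsupp.single_apply]

lemma weight_one_fin3 (d : Fin 3 →₀ ℕ) :
    Finsupp.weight (1 : Fin 3 → ℕ) d = d 0 + d 1 + d 2 := by
  rw [Finsupp.weight_apply, Finsupp.sum_fintype _ _ (fun i => by simp)]
  simp [Fin.sum_univ_three]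

lemma deg2_z (d : Fin 3 →₀ ℕ) (h : Finsupp.weight w112 d = 2) (h2 : d 2 ≠ 0) :
    d = Finsupp.single 2 1 := by
  rw [weight_w112] at h
  have h0 : d 0 = 0 := by omega
  have h1 : d 1 = 0 := by omega
  have h2' : d 2 = 1 := by omega
  ext i; fin_cases i <;> simp [h0, h1, h2', Finsupp.single_apply]

lemma structure_deg1 (f : P3) (hf : f.IsWeightedHomogeneous w112 1) :
    f = C (coeff (Finsupp.single 0 1) f) * X 0 + C (coeff (Finsupp.single 1 1) f) * X 1 := by
  have hne : (Finsupp.single 1 1 : Fin 3 →₀ ℕ) ≠ Finsupp.single 0 1 := by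
    intro h
    have := DFunLike.congr_fun h 0
    simp [Finsupp.single_apply] at this
  ext d
  rw [coeff_add, coeff_C_mul, coeff_C_mul, coeff_X', coeff_X']
  by_cases h0 : d = Finsupp.single 0 1
  · subst h0; rw [if_pos rfl, if_neg hne]; ring
  by_cases h1 : d = Finsupp.single 1 1
  · subst h1; rw [if_neg (by intro h; exact hne h.symm), if_pos rfl]; ring
  · rw [if_neg (fun h => h0 h.symm), if_neg (fun h => h1 h.symm)]
    by_contra hc
    have : coeff d f ≠ 0 := by intro h; apply hc; rw [h]; ring
    rcases deg1_cases d (hf this) with h | h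
    · exact h0 h
    · exact h1 h

lemma structure_deg2 (f : P3) (hf : f.IsWeightedHomogeneous w112 2) :
    (f - C (coeff (Finsupp.single 2 1) f) * X 2) ∈ supported ℂ ({0, 1} : Set (Fin 3)) ∧
    (f - C (coeff (Finsupp.single 2 1) f) * X 2).IsHomogeneous 2 ∧
    f = C (coeff (Finsupp.single 2 1) f) * X 2 +
      (f - C (coeff (Finsupp.single 2 1) f) * X 2) := by
  set q := f - C (coeff (Finsupp.single 2 1) f) * X 2 with hq
  have key : ∀ d : Fin 3 →₀ ℕ, coeff d q ≠ 0 → d 2 = 0 ∧ d 0 + d 1 = 2 := by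
    intro d hd
    have hcoeff : coeff d q = coeff d f -
        coeff (Finsupp.single 2 1) f * (if Finsupp.single 2 1 = d then 1 else 0) := by
      rw [hq, coeff_sub, coeff_C_mul, coeff_X']
    by_cases hdz : d = Finsupp.single 2 1
    · exfalso; apply hd; rw [hcoeff, if_pos hdz.symm, hdz]; ring
    · rw [hcoeff, if_neg (fun h => hdz h.symm)] at hd
      have hdf : coeff d f ≠ 0 := by intro h; apply hd; rw [h]; ring
      have hw := hf hdf
      have h2 : d 2 = 0 := by
        by_contra h2
        exact hdz (deg2_z d hw h2)
      rw [weight_w112] at hw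
      omega
  refine ⟨?_, ?_, by ring⟩
  · rw [mem_supported]
    intro i hi
    simp only [Finset.mem_coe] at hi
    obtain ⟨d, hd, hid⟩ := (mem_vars i).mp hi
    rw [mem_support_iff] at hd
    have := (key d hd).1
    have hdi : d i ≠ 0 := (Finsupp.mem_support_iff).mp hid
    fin_cases i
    · exact Set.mem_insert _ _
    · exact Set.mem_insert_of_mem _ rfl
    · exact absurd this hdi
  · intro d hd
    have := key d hd
    show Finsupp.weight 1 d = 2
    rw [weight_one_fin3]
    omega

lemma comm_component (φ : P3 ≃ₐ[ℂ] P3)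
    (hφ : ∀ (n : ℕ) (f : P3), f ∈ weightedHomogeneousSubmodule ℂ w112 n →
      φ f ∈ weightedHomogeneousSubmodule ℂ w112 n) (n : ℕ) (g : P3) :
    φ (weightedHomogeneousComponent w112 n g) = weightedHomogeneousComponent w112 n (φ g) := by
  have h1 : φ g = ∑ᶠ m, φ (weightedHomogeneousComponent w112 m g) := by
    conv_lhs => rw [← sum_weightedHomogeneousComponent (w := w112) g]
    exact AddEquiv.map_finsum φ.toRingEquiv.toAddEquiv _
  have hfin : (Function.support fun m => φ (weightedHomogeneousComponent w112 m g)).Finite := by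
    apply (weightedHomogeneousComponent_finsupp (w := w112) g).subset
    intro m hm
    simp only [Function.mem_support] at hm ⊢
    intro h; apply hm; rw [h, map_zero]
  rw [h1]
  have h2 := (weightedHomogeneousComponent (R := ℂ) w112 n).toAddMonoidHom.map_finsum hfin
  simp only [LinearMap.toAddMonoidHom_coe] at h2
  rw [h2, finsum_eq_single _ n]
  · exact ((mem_weightedHomogeneousSubmodule ℂ w112 n _).mp
      (hφ n _ (weightedHomogeneousComponent_mem w112 g n))).weightedHomogeneousComponent_same.symm
  · intro m hm
    exact ((mem_weightedHomogeneousSubmodule ℂ w112 m _).mp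
      (hφ m _ (weightedHomogeneousComponent_mem w112 g m))).weightedHomogeneousComponent_ne n hm.symm

lemma coeff_z_of_supported (p : P3) (hp : p ∈ supported ℂ ({0, 1} : Set (Fin 3))) :
    coeff (Finsupp.single 2 1) p = 0 := by
  by_contra h
  have h2 : (2 : Fin 3) ∈ p.vars := by
    rw [mem_vars]
    exact ⟨Finsupp.single 2 1, mem_support_iff.mpr h, by simp⟩
  have := (mem_supported.mp hp) h2
  simp [Fin.ext_iff] at this

lemma lin_extract (s t s' t' : ℂ)
    (h : (C s * X 0 + C t * X 1 : P3) = C s' * X 0 + C t' * X 1) : s = s' ∧ t = t' := by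
  have hne : (Finsupp.single 1 1 : Fin 3 →₀ ℕ) ≠ Finsupp.single 0 1 := by
    intro hh
    have := DFunLike.congr_fun hh 0
    simp [Finsupp.single_apply] at this
  have hne' : (Finsupp.single 0 1 : Fin 3 →₀ ℕ) ≠ Finsupp.single 1 1 := fun hh => hne hh.symm
  constructor
  · have := congrArg (coeff (Finsupp.single 0 1)) h
    simpa [coeff_X', hne, hne'] using this
  · have := congrArg (coeff (Finsupp.single 1 1)) h
    simpa [coeff_X', hne, hne'] using this

/-- Any `ℂ`-algebra automorphism `φ` of `ℂ[x,y,z]` preserving the weighted grading with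
`wt(x) = wt(y) = 1`, `wt(z) = 2` is of the form
`φ(x) = αx + βy`, `φ(y) = γx + δy`, `φ(z) = εz + q(x,y)` with `αδ − βγ ≠ 0`, `ε ≠ 0`, and
`q` a homogeneous polynomial of degree 2 in the variables `x`, `y` only. -/
theorem graded_automorphism_of_weighted_polynomial_ring
    (φ : P3 ≃ₐ[ℂ] P3)
    (hφ : ∀ (n : ℕ) (f : P3), f ∈ weightedHomogeneousSubmodule ℂ w112 n →
      φ f ∈ weightedHomogeneousSubmodule ℂ w112 n) :
    ∃ α β γ δ ε : ℂ, α * δ - β * γ ≠ 0 ∧ ε ≠ 0 ∧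
      ∃ q : P3, q ∈ supported ℂ ({0, 1} : Set (Fin 3)) ∧ q.IsHomogeneous 2 ∧
        φ (X 0) = C α * X 0 + C β * X 1 ∧
        φ (X 1) = C γ * X 0 + C δ * X 1 ∧
        φ (X 2) = C ε * X 2 + q := by
  have hC : ∀ r : ℂ, φ (C r) = C r := fun r => by
    rw [← algebraMap_eq]; exact φ.commutes r
  have hX0mem : (X 0 : P3) ∈ weightedHomogeneousSubmodule ℂ w112 1 := by
    have := isWeightedHomogeneous_X ℂ w112 (0 : Fin 3)
    rwa [show w112 0 = 1 from rfl] at this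
  have hX1mem : (X 1 : P3) ∈ weightedHomogeneousSubmodule ℂ w112 1 := by
    have := isWeightedHomogeneous_X ℂ w112 (1 : Fin 3)
    rwa [show w112 1 = 1 from rfl] at this
  have hX2mem : (X 2 : P3) ∈ weightedHomogeneousSubmodule ℂ w112 2 := by
    have := isWeightedHomogeneous_X ℂ w112 (2 : Fin 3)
    rwa [show w112 2 = 2 from rfl] at this
  set α := coeff (Finsupp.single 0 1) (φ (X 0)) with hα
  set β := coeff (Finsupp.single 1 1) (φ (X 0)) with hβ
  set γ := coeff (Finsupp.single 0 1) (φ (X 1)) with hγ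
  set δ := coeff (Finsupp.single 1 1) (φ (X 1)) with hδ
  set ε := coeff (Finsupp.single 2 1) (φ (X 2)) with hε
  have heq0 : φ (X 0) = C α * X 0 + C β * X 1 := structure_deg1 _ (hφ 1 _ hX0mem)
  have heq1 : φ (X 1) = C γ * X 0 + C δ * X 1 := structure_deg1 _ (hφ 1 _ hX1mem)
  obtain ⟨hqsupp, hqhom, heq2⟩ := structure_deg2 (φ (X 2)) (hφ 2 _ hX2mem)
  set q := φ (X 2) - C ε * X 2 with hqdef
  -- preimage of X 0 and X 1
  have hpre : ∀ i : Fin 3, (X i : P3) ∈ weightedHomogeneousSubmodule ℂ w112 1 →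
      ∃ a b : ℂ, C a * φ (X 0) + C b * φ (X 1) = X i := by
    intro i hi
    set p := weightedHomogeneousComponent w112 1 (φ.symm (X i)) with hp
    have hφp : φ p = X i := by
      rw [hp, comm_component φ hφ 1, AlgEquiv.apply_symm_apply]
      exact IsWeightedHomogeneous.weightedHomogeneousComponent_same hi
    have hpstruct := structure_deg1 p (weightedHomogeneousComponent_isWeightedHomogeneous 1 _)
    refine ⟨coeff (Finsupp.single 0 1) p, coeff (Finsupp.single 1 1) p, ?_⟩
    rw [← hφp]
    conv_rhs => rw [hpstruct]
    rw [map_add, map_mul, map_mul, hC, hC]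
  obtain ⟨a, b, hab⟩ := hpre 0 hX0mem
  obtain ⟨c, d, hcd⟩ := hpre 1 hX1mem
  rw [heq0, heq1] at hab hcd
  have hab' : (C (a * α + b * γ) * X 0 + C (a * β + b * δ) * X 1 : P3)
      = C 1 * X 0 + C 0 * X 1 := by
    calc (C (a * α + b * γ) * X 0 + C (a * β + b * δ) * X 1 : P3)
        = C a * (C α * X 0 + C β * X 1) + C b * (C γ * X 0 + C δ * X 1) := by
          simp only [map_add, map_mul]; ring
      _ = X 0 := hab
      _ = C 1 * X 0 + C 0 * X 1 := by simp
  have hcd' : (C (c * α + d * γ) * X 0 + C (c * β + d * δ) * X 1 : P3)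
      = C 0 * X 0 + C 1 * X 1 := by
    calc (C (c * α + d * γ) * X 0 + C (c * β + d * δ) * X 1 : P3)
        = C c * (C α * X 0 + C β * X 1) + C d * (C γ * X 0 + C δ * X 1) := by
          simp only [map_add, map_mul]; ring
      _ = X 1 := hcd
      _ = C 0 * X 0 + C 1 * X 1 := by simp
  obtain ⟨h1, h2⟩ := lin_extract _ _ _ _ hab'
  obtain ⟨h3, h4⟩ := lin_extract _ _ _ _ hcd'
  have hdet : (a * d - b * c) * (α * δ - β * γ) = 1 := by
    linear_combination (c * β + d * δ) * h1 + h4 - (c * α + d * γ) * h2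
  -- preimage of X 2
  have hp2 : ∃ e : ℂ, ∃ q' : P3, q' ∈ supported ℂ ({0, 1} : Set (Fin 3)) ∧
      C e * φ (X 2) + φ q' = X 2 := by
    set p := weightedHomogeneousComponent w112 2 (φ.symm (X 2)) with hp
    have hφp : φ p = X 2 := by
      rw [hp, comm_component φ hφ 2, AlgEquiv.apply_symm_apply]
      exact IsWeightedHomogeneous.weightedHomogeneousComponent_same hX2mem
    obtain ⟨hs, _, hstruct⟩ :=
      structure_deg2 p (weightedHomogeneousComponent_isWeightedHomogeneous 2 _)
    have h5 : φ p = C (coeff (Finsupp.single 2 1) p) * φ (X 2) +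
        φ (p - C (coeff (Finsupp.single 2 1) p) * X 2) := by
      conv_lhs => rw [hstruct]
      rw [map_add, map_mul, hC]
    exact ⟨coeff (Finsupp.single 2 1) p, _, hs, by rw [← h5, hφp]⟩
  obtain ⟨e, q', hq's, he⟩ := hp2
  have hφq' : φ q' ∈ supported ℂ ({0, 1} : Set (Fin 3)) := by
    have hgen : ∀ x ∈ (X '' ({0, 1} : Set (Fin 3)) : Set P3),
        φ x ∈ supported ℂ ({0, 1} : Set (Fin 3)) := by
      rintro x ⟨i, hi, rfl⟩
      have hx0 : (X 0 : P3) ∈ supported ℂ ({0, 1} : Set (Fin 3)) :=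
        X_mem_supported.mpr (Set.mem_insert _ _)
      have hx1 : (X 1 : P3) ∈ supported ℂ ({0, 1} : Set (Fin 3)) :=
        X_mem_supported.mpr (Set.mem_insert_of_mem _ rfl)
      rcases hi with rfl | rfl
      · rw [heq0]
        exact add_mem (mul_mem (Subalgebra.algebraMap_mem _ α) hx0)
          (mul_mem (Subalgebra.algebraMap_mem _ β) hx1)
      · rw [heq1]
        exact add_mem (mul_mem (Subalgebra.algebraMap_mem _ γ) hx0)
          (mul_mem (Subalgebra.algebraMap_mem _ δ) hx1)
    refine Algebra.adjoin_induction hgen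
      (fun r => by rw [AlgEquiv.commutes]; exact Subalgebra.algebraMap_mem _ r)
      (fun x y _ _ hx hy => by rw [map_add]; exact add_mem hx hy)
      (fun x y _ _ hx hy => by rw [map_mul]; exact mul_mem hx hy) hq's
  have hkey : e * ε = 1 := by
    have := congrArg (coeff (Finsupp.single 2 1)) he
    rw [coeff_add, coeff_C_mul, heq2, coeff_add, coeff_C_mul, coeff_X', if_pos rfl,
      coeff_z_of_supported _ hqsupp, coeff_z_of_supported _ hφq'] at this
    linear_combination this
  refine ⟨α, β, γ, δ, ε, ?_, ?_, q, hqsupp, hqhom, heq0, heq1, heq2⟩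
  · intro h
    rw [h, mul_zero] at hdet
    exact zero_ne_one hdet
  · intro h
    rw [h, mul_zero] at hkey
    exact zero_ne_one hkey

end
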